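/- Let G be a connected simple graph of order n ≥ 3 with maximum degree Δ(G). Then the distinguishing number of the middle graph satisfies D(M(G)) ≤ Δ(G). Moreover, this bound is sharp: if G ≅ C_n is a cycle of order n ≥ 3, then D(M(G)) = 2 = Δ(G). -/

import Mathlib

open SimpleGraph

/-- The subdivision graph `S(G)`: each edge `{u,v}` of `G` is replaced by a new
vertex (the element of `G.edgeSet`) adjacent to both `u` and `v`. -/
def subdivisionGraph {V : Type*} (G : SimpleGraph V) : SimpleGraph (V ⊕ G.edgeSet) where
  Adj x y :=
    match x, y with
    | Sum.inl u, Sum.inr e => u ∈ (e : Sym2 V)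
    | Sum.inr e, Sum.inl u => u ∈ (e : Sym2 V)
    | _, _ => False
  symm := ⟨by rintro (u | e) (v | f) h <;> simp_all⟩
  loopless := ⟨by rintro (u | e) h <;> simp_all⟩

/-- The central graph `C(G)`: obtained from the subdivision graph `S(G)` by joining
every pair of distinct vertices of `G` that are non-adjacent in `G`. -/
def centralGraph {V : Type*} (G : SimpleGraph V) : SimpleGraph (V ⊕ G.edgeSet) where
  Adj x y :=
    match x, y with
    | Sum.inl u, Sum.inl v => u ≠ v ∧ ¬ G.Adj u v
    | Sum.inl u, Sum.inr e => u ∈ (e : Sym2 V)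
    | Sum.inr e, Sum.inl u => u ∈ (e : Sym2 V)
    | Sum.inr _, Sum.inr _ => False
  symm := ⟨by
    rintro (u | e) (v | f) h
    · exact ⟨h.1.symm, fun a => h.2 a.symm⟩
    · exact h
    · exact h
    · exact h⟩
  loopless := ⟨by
    rintro (u | e) h
    · exact h.1 rfl
    · exact h⟩

/-- The middle graph `M(G)`: obtained from the subdivision graph `S(G)` by joining
each pair of distinct subdivided vertices corresponding to adjacent edges of `G`. -/
def middleGraph {V : Type*} (G : SimpleGraph V) : SimpleGraph (V ⊕ G.edgeSet) where
  Adj x y :=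
    match x, y with
    | Sum.inl u, Sum.inr e => u ∈ (e : Sym2 V)
    | Sum.inr e, Sum.inl u => u ∈ (e : Sym2 V)
    | Sum.inr e, Sum.inr f => e ≠ f ∧ ∃ u, u ∈ (e : Sym2 V) ∧ u ∈ (f : Sym2 V)
    | Sum.inl _, Sum.inl _ => False
  symm := ⟨by
    rintro (u | e) (v | f) h
    · exact h
    · exact h
    · exact h
    · exact ⟨h.1.symm, h.2.imp fun u hu => ⟨hu.2, hu.1⟩⟩⟩
  loopless := ⟨by
    rintro (u | e) h
    · exact h
    · exact h.1 rfl⟩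

/-- The line graph `L(G)`: vertices are the edges of `G`, two distinct edges being
adjacent when they share an endpoint. -/
def lineG {V : Type*} (G : SimpleGraph V) : SimpleGraph G.edgeSet where
  Adj e f := e ≠ f ∧ ∃ u, u ∈ (e : Sym2 V) ∧ u ∈ (f : Sym2 V)
  symm := ⟨fun e f h => ⟨h.1.symm, h.2.imp fun u hu => ⟨hu.2, hu.1⟩⟩⟩
  loopless := ⟨fun e h => h.1 rfl⟩

/-- The endline graph `G⁺`: to each vertex `v` of `G` we attach a new pendant
vertex; `Sum.inl` is the copy of `V(G)` and `Sum.inr` are the new vertices. -/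
def endlineGraph {V : Type*} (G : SimpleGraph V) : SimpleGraph (V ⊕ V) where
  Adj x y :=
    match x, y with
    | Sum.inl u, Sum.inl v => G.Adj u v
    | Sum.inl u, Sum.inr v => u = v
    | Sum.inr u, Sum.inl v => u = v
    | Sum.inr _, Sum.inr _ => False
  symm := ⟨by
    rintro (u | u) (v | v) h
    · exact h.symm
    · exact h.symm
    · exact h.symm
    · exact h⟩
  loopless := ⟨by
    rintro (u | u) h
    · exact G.loopless.irrefl u h
    · exact h⟩

/-- The join `G₁ + G₂` of two vertex-disjoint graphs: their disjoint union together
with all edges between the two vertex sets. -/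
def joinGraph {V₁ V₂ : Type*} (G₁ : SimpleGraph V₁) (G₂ : SimpleGraph V₂) :
    SimpleGraph (V₁ ⊕ V₂) where
  Adj x y :=
    match x, y with
    | Sum.inl u, Sum.inl v => G₁.Adj u v
    | Sum.inr u, Sum.inr v => G₂.Adj u v
    | Sum.inl _, Sum.inr _ => True
    | Sum.inr _, Sum.inl _ => True
  symm := ⟨by
    rintro (u | u) (v | v) h
    · exact h.symm
    · trivial
    · trivial
    · exact h.symm⟩
  loopless := ⟨by
    rintro (u | u) h
    · exact G₁.loopless.irrefl u h
    · exact G₂.loopless.irrefl u h⟩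

/-- The maximum degree `Δ(H)` of a graph (as a supremum of cardinalities of
neighborhoods, which agrees with the usual maximum degree for finite graphs). -/
noncomputable def maxDeg {W : Type*} (H : SimpleGraph W) : ℕ :=
  sSup {k | ∃ v : W, k = (H.neighborSet v).ncard}

/-- A graph is regular if all vertices have the same degree. -/
def IsRegularGraph {W : Type*} (H : SimpleGraph W) : Prop :=
  ∀ u v : W, (H.neighborSet u).ncard = (H.neighborSet v).ncard

/-- The distinguishing number `D(H)`: the least `d` such that `H` admits a vertex
coloring with `d` colors preserved only by the identity automorphism. -/
noncomputable def distinguishingNumber {W : Type*} (H : SimpleGraph W) : ℕ :=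
  sInf {d | ∃ c : W → Fin d, ∀ φ : H ≃g H, (∀ v, c (φ v) = c v) → ∀ v, φ v = v}

/-- The distinguishing index `D'(H)`: the least `d` such that `H` admits an edge
coloring with `d` colors preserved only by the identity automorphism. -/
noncomputable def distinguishingIndex {W : Type*} (H : SimpleGraph W) : ℕ :=
  sInf {d | ∃ c : H.edgeSet → Fin d,
    ∀ φ : H ≃g H, (∀ e, c (φ.mapEdgeSet e) = c e) → ∀ v, φ v = v}

/-- A proper total coloring of `H` with `d` colors: adjacent vertices, adjacent
edges, and incident vertex/edge pairs receive distinct colors. -/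
def IsProperTotalColoring {W : Type*} (H : SimpleGraph W) {d : ℕ}
    (f : W ⊕ H.edgeSet → Fin d) : Prop :=
  (∀ u v : W, H.Adj u v → f (Sum.inl u) ≠ f (Sum.inl v)) ∧
  (∀ e e' : H.edgeSet, e ≠ e' → (∃ u, u ∈ (e : Sym2 W) ∧ u ∈ (e' : Sym2 W)) →
    f (Sum.inr e) ≠ f (Sum.inr e')) ∧
  (∀ (v : W) (e : H.edgeSet), v ∈ (e : Sym2 W) → f (Sum.inl v) ≠ f (Sum.inr e))

/-- An automorphism `φ` preserves a total coloring `f`. -/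
def PreservesTotalColoring {W : Type*} (H : SimpleGraph W) {d : ℕ}
    (f : W ⊕ H.edgeSet → Fin d) (φ : H ≃g H) : Prop :=
  (∀ v : W, f (Sum.inl (φ v)) = f (Sum.inl v)) ∧
  (∀ e : H.edgeSet, f (Sum.inr (φ.mapEdgeSet e)) = f (Sum.inr e))

/-- The total chromatic number `χ''(H)`. -/
noncomputable def totalChromaticNumber {W : Type*} (H : SimpleGraph W) : ℕ :=
  sInf {d | ∃ f : W ⊕ H.edgeSet → Fin d, IsProperTotalColoring H f}

/-- The total distinguishing chromatic number `χ''_D(H)`: the least `d` such that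
`H` has a proper total coloring with `d` colors preserved only by the identity. -/
noncomputable def totalDistinguishingChromaticNumber {W : Type*} (H : SimpleGraph W) : ℕ :=
  sInf {d | ∃ f : W ⊕ H.edgeSet → Fin d, IsProperTotalColoring H f ∧
    ∀ φ : H ≃g H, PreservesTotalColoring H f φ → ∀ v, φ v = v}

/-- The color class `C_H(u)` of a vertex under a total coloring: the color of `u`
together with the colors of the edges incident to `u`. -/
def totalColorClass {W : Type*} (H : SimpleGraph W) {d : ℕ}
    (f : W ⊕ H.edgeSet → Fin d) (u : W) : Set (Fin d) :=
  {f (Sum.inl u)} ∪ {x | ∃ e : H.edgeSet, u ∈ (e : Sym2 W) ∧ x = f (Sum.inr e)}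

/-- An AVD-total coloring: a proper total coloring in which adjacent vertices have
distinct color classes. -/
def IsAVDTotalColoring {W : Type*} (H : SimpleGraph W) {d : ℕ}
    (f : W ⊕ H.edgeSet → Fin d) : Prop :=
  IsProperTotalColoring H f ∧
  ∀ u v : W, H.Adj u v → totalColorClass H f u ≠ totalColorClass H f v

/-- The AVD-total chromatic number `χ''ₐ(H)`. -/
noncomputable def avdTotalChromaticNumber {W : Type*} (H : SimpleGraph W) : ℕ :=
  sInf {d | ∃ f : W ⊕ H.edgeSet → Fin d, IsAVDTotalColoring H f}

/-- A total dominator coloring: a proper vertex coloring such that every vertex is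
adjacent to every vertex of some (nonempty) color class. -/
def IsTotalDominatorColoring {W : Type*} (H : SimpleGraph W) {d : ℕ}
    (c : W → Fin d) : Prop :=
  (∀ u v : W, H.Adj u v → c u ≠ c v) ∧
  (∀ v : W, ∃ i : Fin d, (∃ w, c w = i) ∧ ∀ w, c w = i → H.Adj v w)

/-- The total dominator chromatic number `χᵗ_d(H)`. -/
noncomputable def tdChromaticNumber {W : Type*} (H : SimpleGraph W) : ℕ :=
  sInf {d | ∃ c : W → Fin d, IsTotalDominatorColoring H c}

/-!
An automorphism `φ` of `M(G)` maps original vertices to original vertices: if `φ v` were the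
subdivision vertex of an edge `ab`, then `φ⁻¹ a` and `φ⁻¹ b` would be two neighbours of `v`,
i.e. two distinct edges at `v`, hence adjacent in `M(G)`, while `a` and `b` are not. So `φ` is
induced by an automorphism `σ` of `G`.

Give a root `r` its own colour and label every edge from the `i`-th to the `(i+1)`-st distance
layer around `r` by an injective labelling of the neighbours of its inner endpoint; as
`Δ(G) ≥ 2`, `Δ(G)` colours suffice for both. An automorphism preserving this colouring fixes
`r`, and then, layer by layer, every vertex. For a cycle, a rotation lifts to a nontrivial
automorphism of `M(C_n)`, so one colour is not enough.
-/

namespace SimpleGraph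

variable {V V' : Type*} {G : SimpleGraph V} {G' : SimpleGraph V'}

lemma Reachable.dist_map_le (f : G →g G') {u v : V} (h : G.Reachable u v) :
    G'.dist (f u) (f v) ≤ G.dist u v := by
  obtain ⟨p, hp⟩ := h.exists_walk_length_eq_dist
  simpa [hp] using G'.dist_le (p.map f)

lemma Iso.dist_apply (σ : G ≃g G') (u v : V) : G'.dist (σ u) (σ v) = G.dist u v := by
  by_cases h : G.Reachable u v
  · refine le_antisymm (h.dist_map_le σ.toHom) ?_
    simpa using (h.map σ.toHom).dist_map_le σ.symm.toHom
  · have h' : ¬G'.Reachable (σ u) (σ v) := fun h' => h (by simpa using h'.map σ.symm.toHom)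
    rw [dist_eq_zero_of_not_reachable h, dist_eq_zero_of_not_reachable h']

lemma exists_adj_dist_eq_of_dist_eq_add_one {r v : V} {n : ℕ} (h : G.dist r v = n + 1) :
    ∃ u, G.Adj u v ∧ G.dist r u = n := by
  have hvr : G.Reachable v r := (Reachable.of_dist_ne_zero (by omega : G.dist r v ≠ 0)).symm
  obtain ⟨p, hp⟩ := hvr.exists_walk_length_eq_dist
  have hlen : p.length = n + 1 := by rw [hp, dist_comm, h]
  cases p with
  | nil => simp at hlen
  | @cons _ u _ hvu q =>
    have hq : G.dist r u ≤ n := by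
      simpa using (G.dist_le q.reverse).trans_eq (by simpa using hlen)
    refine ⟨u, hvu.symm, ?_⟩
    rcases hvu.diff_dist_adj (u := r) with h' | h' | h' <;> omega

theorem Iso.apply_eq_self_of_fix_root {α : Type*} (hG : G.Preconnected) (σ : G ≃g G) {r : V}
    (hr : σ r = r) {g : V → V → α} (hg : ∀ u, (G.neighborSet u).InjOn (g u))
    (hσg : ∀ u v, G.Adj u v → G.dist r v = G.dist r u + 1 → g (σ u) (σ v) = g u v)
    (v : V) : σ v = v := by
  suffices ∀ n v, G.dist r v = n → σ v = v from this _ v rfl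
  intro n
  induction n with
  | zero => intro v hv; rwa [← (hG r v).dist_eq_zero_iff.1 hv]
  | succ n ih =>
    intro v hv
    obtain ⟨u, huv, hu⟩ := exists_adj_dist_eq_of_dist_eq_add_one hv
    have hσu : σ u = u := ih u hu
    have hσuv : G.Adj u (σ v) := hσu ▸ σ.map_adj_iff.2 huv
    exact hg u hσuv huv (by simpa [hσu] using hσg u v huv (by omega))

variable (G) in
noncomputable def layerLabel {α : Type*} (r : V) (g : V → V → α) (a₀ : α) :
    Sym2 V → α :=
  Sym2.lift ⟨fun a b => if G.dist r a + 1 = G.dist r b then g a b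
      else if G.dist r b + 1 = G.dist r a then g b a else a₀,
    fun a b => by dsimp only; split_ifs <;> first | rfl | omega⟩

lemma layerLabel_mk {α : Type*} {r a b : V} {g : V → V → α} {a₀ : α}
    (h : G.dist r b = G.dist r a + 1) : layerLabel G r g a₀ s(a, b) = g a b := by
  simp [layerLabel, h]

lemma exists_injOn_neighborSet [Fintype V] [DecidableRel G.Adj] {d : ℕ} [NeZero d] {u : V}
    (hdeg : G.degree u ≤ d) : ∃ f : V → Fin d, (G.neighborSet u).InjOn f := by
  obtain ⟨ι⟩ := Function.Embedding.nonempty_of_card_le (α := G.neighborSet u) (β := Fin d)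
    (by rwa [card_neighborSet_eq_degree, Fintype.card_fin])
  exact Set.exists_injOn_iff_injective.2 ⟨ι, ι.injective⟩

def cycleGraph.rotate (n : ℕ) : cycleGraph (n + 1) ≃g cycleGraph (n + 1) where
  toEquiv := Equiv.addRight 1
  map_rel_iff' := by simp [cycleGraph_adj']

end SimpleGraph

namespace middleGraph

variable {V V' : Type*} {G : SimpleGraph V} {G' : SimpleGraph V'}

def map (σ : G ≃g G') : middleGraph G ≃g middleGraph G' where
  toEquiv := Equiv.sumCongr σ.toEquiv σ.mapEdgeSet
  map_rel_iff' := by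
    have hmem : ∀ (u : V) (e : G.edgeSet), σ u ∈ Sym2.map σ e.1 ↔ u ∈ e.1 :=
      fun u e => by simp [Sym2.mem_map, σ.injective.eq_iff]
    rintro (u | e) (v | f)
    · exact Iff.rfl
    · exact hmem u f
    · exact hmem v e
    · show σ.mapEdgeSet e ≠ σ.mapEdgeSet f ∧ _ ↔ e ≠ f ∧ _
      rw [σ.mapEdgeSet.injective.ne_iff]
      refine and_congr_right fun _ => ⟨fun ⟨w, hwe, hwf⟩ => ?_,
        fun ⟨u, hue, huf⟩ => ⟨σ u, (hmem u e).2 hue, (hmem u f).2 huf⟩⟩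
      obtain ⟨u, rfl⟩ := σ.surjective w
      exact ⟨u, (hmem u e).1 hwe, (hmem u f).1 hwf⟩

lemma map_refl : map (Iso.refl (G := G)) = Iso.refl := by
  ext (v | e)
  · rfl
  · exact congrArg Sum.inr (Subtype.ext (by simp))

lemma exists_eq_inr_of_adj_inl {v : V} {x : V ⊕ G.edgeSet} (h : (middleGraph G).Adj (.inl v) x) :
    ∃ e : G.edgeSet, x = .inr e ∧ v ∈ (e : Sym2 V) := by
  rcases x with w | e
  · exact h.elim
  · exact ⟨e, rfl, h⟩

lemma exists_apply_inl (φ : middleGraph G ≃g middleGraph G') (v : V) :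
    ∃ w, φ (.inl v) = .inl w := by
  rcases hφv : φ (.inl v) with w | ⟨e, he⟩
  · exact ⟨w, rfl⟩
  exfalso
  induction e using Sym2.ind with
  | _ a b =>
  have hadj : ∀ x ∈ s(a, b), ∃ f : G.edgeSet, φ.symm (.inl x) = .inr f ∧ v ∈ f.1 := by
    intro x hx
    refine exists_eq_inr_of_adj_inl ?_
    rw [← φ.symm_apply_apply (.inl v), hφv, φ.symm.map_rel_iff]
    exact hx
  obtain ⟨f₁, hf₁, hv₁⟩ := hadj a (Sym2.mem_mk_left a b)
  obtain ⟨f₂, hf₂, hv₂⟩ := hadj b (Sym2.mem_mk_right a b)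
  have hne : f₁ ≠ f₂ := by
    rintro rfl
    exact G'.ne_of_adj he (by simpa using hf₁.trans hf₂.symm)
  have := φ.map_rel_iff.2
    (show (middleGraph G).Adj (.inr f₁) (.inr f₂) from ⟨hne, v, hv₁, hv₂⟩)
  rw [← hf₁, ← hf₂, φ.apply_symm_apply, φ.apply_symm_apply] at this
  exact this

lemma exists_apply_inr (φ : middleGraph G ≃g middleGraph G') (e : G.edgeSet) :
    ∃ f, φ (.inr e) = .inr f := by
  rcases hφe : φ (.inr e) with w | f
  · obtain ⟨v, hv⟩ := exists_apply_inl φ.symm w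
    rw [← hφe, φ.symm_apply_apply] at hv
    exact (Sum.inr_ne_inl hv).elim
  · exact ⟨f, rfl⟩

noncomputable def baseMap (φ : middleGraph G ≃g middleGraph G') (v : V) : V' :=
  (exists_apply_inl φ v).choose

lemma apply_inl (φ : middleGraph G ≃g middleGraph G') (v : V) :
    φ (.inl v) = .inl (baseMap φ v) :=
  (exists_apply_inl φ v).choose_spec

lemma baseMap_symm_baseMap (φ : middleGraph G ≃g middleGraph G') (v : V) :
    baseMap φ.symm (baseMap φ v) = v := by
  simpa [apply_inl] using φ.symm_apply_apply (.inl v)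

lemma baseMap_injective (φ : middleGraph G ≃g middleGraph G') : (baseMap φ).Injective :=
  Function.LeftInverse.injective (baseMap_symm_baseMap φ)

lemma coe_eq_map_of_apply_inr (φ : middleGraph G ≃g middleGraph G') {e : G.edgeSet}
    {f : G'.edgeSet} (h : φ (.inr e) = .inr f) : (f : Sym2 V') = Sym2.map (baseMap φ) e := by
  have hmem : ∀ v ∈ (e : Sym2 V), baseMap φ v ∈ (f : Sym2 V') := fun v hv => by
    have := φ.map_rel_iff.2 (show (middleGraph G).Adj (.inl v) (.inr e) from hv)
    rwa [apply_inl, h] at this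
  obtain ⟨e, he⟩ := e
  induction e using Sym2.ind with
  | _ a b =>
  rw [Sym2.map_mk]
  exact (Sym2.mem_and_mem_iff ((baseMap_injective φ).ne (G.ne_of_adj he))).1
    ⟨hmem a (Sym2.mem_mk_left a b), hmem b (Sym2.mem_mk_right a b)⟩

lemma adj_baseMap (φ : middleGraph G ≃g middleGraph G') {u v : V} (h : G.Adj u v) :
    G'.Adj (baseMap φ u) (baseMap φ v) := by
  obtain ⟨f, hf⟩ := exists_apply_inr φ ⟨s(u, v), h⟩
  simpa [coe_eq_map_of_apply_inr φ hf] using f.2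

noncomputable def baseIso (φ : middleGraph G ≃g middleGraph G') : G ≃g G' where
  toFun := baseMap φ
  invFun := baseMap φ.symm
  left_inv := baseMap_symm_baseMap φ
  right_inv v := by simpa using baseMap_symm_baseMap φ.symm v
  map_rel_iff' {u v} := ⟨fun h => by
    simpa only [baseMap_symm_baseMap] using
      adj_baseMap φ.symm (u := baseMap φ u) (v := baseMap φ v) h,
    adj_baseMap φ⟩

theorem map_baseIso (φ : middleGraph G ≃g middleGraph G') : map (baseIso φ) = φ := by
  ext (v | e)
  · exact (apply_inl φ v).symm
  · obtain ⟨f, hf⟩ := exists_apply_inr φ e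
    rw [hf]
    exact congrArg Sum.inr (Subtype.ext (coe_eq_map_of_apply_inr φ hf).symm)

end middleGraph

section DistinguishingNumber

variable {W : Type*} {H : SimpleGraph W}

lemma distinguishingNumber_le {d : ℕ} (c : W → Fin d)
    (hc : ∀ φ : H ≃g H, (∀ v, c (φ v) = c v) → ∀ v, φ v = v) :
    distinguishingNumber H ≤ d :=
  Nat.sInf_le ⟨c, hc⟩

lemma exists_distinguishing_coloring [Finite W] (H : SimpleGraph W) :
    ∃ c : W → Fin (distinguishingNumber H),
      ∀ φ : H ≃g H, (∀ v, c (φ v) = c v) → ∀ v, φ v = v :=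
  Nat.sInf_mem
    (s := {d | ∃ c : W → Fin d, ∀ φ : H ≃g H, (∀ v, c (φ v) = c v) → ∀ v, φ v = v})
    ⟨Nat.card W, Finite.equivFin W, fun _ hφ v => (Finite.equivFin W).injective (hφ v)⟩

lemma two_le_distinguishingNumber [Finite W] (φ : H ≃g H) {v : W} (hv : φ v ≠ v) :
    2 ≤ distinguishingNumber H := by
  obtain ⟨c, hc⟩ := exists_distinguishing_coloring H
  by_contra! hd
  obtain hd | hd : distinguishingNumber H = 0 ∨ distinguishingNumber H = 1 := by omega
  · exact (Fin.cast hd (c v)).elim0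
  · have : Subsingleton (Fin (distinguishingNumber H)) := by rw [hd]; infer_instance
    exact hv (hc φ (fun _ => Subsingleton.elim _ _) v)

end DistinguishingNumber

section MaxDegree

variable {V : Type*} [Fintype V] {G : SimpleGraph V} [DecidableRel G.Adj]

lemma maxDeg_eq_maxDegree [Nonempty V] : maxDeg G = G.maxDegree := by
  have hdeg : {k | ∃ v, k = (G.neighborSet v).ncard} = Set.range fun v => G.degree v := by
    ext k
    simp only [Set.mem_ofPred_eq, Set.mem_range, eq_comm (a := k), Set.ncard_eq_toFinset_card',
      Set.toFinset_card, card_neighborSet_eq_degree]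
  obtain ⟨v, hv⟩ := G.exists_maximal_degree_vertex
  rw [maxDeg, hdeg]
  refine le_antisymm (csSup_le (Set.range_nonempty _) ?_)
    (hv ▸ le_csSup (Set.finite_range _).bddAbove ⟨v, rfl⟩)
  rintro _ ⟨w, rfl⟩
  exact G.degree_le_maxDegree w

lemma SimpleGraph.Connected.two_le_maxDegree (hG : G.Connected) (hV : 3 ≤ Fintype.card V) :
    2 ≤ G.maxDegree := by
  by_contra! h
  have hsum : ∑ v, G.degree v ≤ Fintype.card V := by
    simpa using Finset.sum_le_sum fun v (_ : v ∈ Finset.univ) =>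
      (G.degree_le_maxDegree v).trans (Nat.le_of_lt_succ h)
  have hE := hG.card_vert_le_card_edgeSet_add_one
  rw [Nat.card_eq_fintype_card, Nat.card_eq_fintype_card, ← edgeFinset_card] at hE
  have := G.sum_degrees_eq_twice_card_edges
  omega

end MaxDegree

theorem distinguishingNumber_middleGraph_le {V : Type*} [Fintype V] [Nonempty V]
    {G : SimpleGraph V} [DecidableRel G.Adj] (hG : G.Preconnected) {d : ℕ} (hd : 2 ≤ d)
    (hdeg : ∀ v, G.degree v ≤ d) : distinguishingNumber (middleGraph G) ≤ d := by
  classical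
  obtain ⟨k, rfl⟩ : ∃ k, d = k + 2 := ⟨d - 2, by omega⟩
  obtain ⟨r⟩ := ‹Nonempty V›
  choose g hg using fun u => exists_injOn_neighborSet (hdeg u)
  refine distinguishingNumber_le (Sum.elim (fun v => if v = r then 1 else 0)
    fun e => layerLabel G r g 0 e) fun φ hφ => ?_
  rw [← middleGraph.map_baseIso φ] at hφ ⊢
  generalize middleGraph.baseIso φ = σ at hφ ⊢
  have hr : σ r = r := by
    by_contra h
    simpa [middleGraph.map, h] using hφ (.inl r)
  have hσg : ∀ u v, G.Adj u v → G.dist r v = G.dist r u + 1 → g (σ u) (σ v) = g u v := by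
    intro u v huv huvd
    have hσd : G.dist r (σ v) = G.dist r (σ u) + 1 := by
      rw [← hr, σ.dist_apply, σ.dist_apply, huvd]
    simpa [middleGraph.map, layerLabel_mk hσd, layerLabel_mk huvd] using
      hφ (.inr ⟨s(u, v), huv⟩)
  have hσ : σ = Iso.refl := RelIso.ext (σ.apply_eq_self_of_fix_root hG hr hg hσg)
  simp [hσ, middleGraph.map_refl]

/-- For a connected graph `G` of order `n ≥ 3`, `D(M(G)) ≤ Δ(G)`;
moreover the bound is sharp: if `G` is a cycle then `D(M(G)) = 2 = Δ(G)`. -/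
theorem stmt_8 {V : Type*} [Fintype V] (G : SimpleGraph V)
    (hconn : G.Connected) (hn : 3 ≤ Fintype.card V) :
    distinguishingNumber (middleGraph G) ≤ maxDeg G ∧
    (Nonempty (G ≃g cycleGraph (Fintype.card V)) →
      distinguishingNumber (middleGraph G) = 2 ∧ maxDeg G = 2) := by
  classical
  have : Nonempty V := hconn.nonempty
  have hbound : distinguishingNumber (middleGraph G) ≤ maxDeg G := by
    rw [maxDeg_eq_maxDegree]
    exact distinguishingNumber_middleGraph_le hconn.preconnected
      (hconn.two_le_maxDegree hn) G.degree_le_maxDegree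
  refine ⟨hbound, fun ⟨ψ⟩ => ?_⟩
  obtain ⟨m, hm⟩ : ∃ m, Fintype.card V = m + 3 := ⟨Fintype.card V - 3, by omega⟩
  rw [hm] at ψ
  have hdeg : maxDeg G = 2 := by
    rw [maxDeg_eq_maxDegree, ψ.maxDegree_eq]
    exact IsRegularOfDegree.maxDegree_eq (G := cycleGraph (m + 3)) fun _ =>
      cycleGraph_degree_three_le
  let σ : G ≃g G := ψ.trans ((cycleGraph.rotate (m + 2)).trans ψ.symm)
  have hσ : middleGraph.map σ (.inl (ψ.symm 0)) ≠ .inl (ψ.symm 0) := by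
    simp [middleGraph.map, σ, cycleGraph.rotate]
  exact ⟨le_antisymm (hdeg ▸ hbound) (two_le_distinguishingNumber _ hσ), hdeg⟩
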